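/- Let L be a language with a unary connective ¬ and binary connectives ∨ and ∧, F the set of all wffs of L, and ⟨F, 𝒱, ⊨⟩ a semantic structure satisfying (A3), (A1), and (A2). Let |~ be a relation on P(F) × F. Then |~ is a definability preserving pivotal-discriminative consequence relation if and only if |~ satisfies conditions (|~0), (|~6), (|~7), (|~8), and (|~9). -/

import Mathlib

/-- The set of models of a set of formulas `Γ`. -/
def modSet {F V : Type*} (sat : V → F → Prop) (Γ : Set F) : Set V :=
  {v | ∀ α ∈ Γ, sat v α}

/-- The set of formulas satisfied in every valuation of `S`. -/
def thSet {F V : Type*} (sat : V → F → Prop) (S : Set V) : Set F :=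
  {α | S ⊆ modSet sat {α}}

/-- `D`: the family of definable sets of valuations. -/
def defFam {F V : Type*} (sat : V → F → Prop) : Set (Set V) :=
  {S | ∃ Γ : Set F, modSet sat Γ = S}

/-- The basic consequence operator `C_⊢(Γ) = Th(Mod(Γ))`. -/
def cnsq {F V : Type*} (sat : V → F → Prop) (Γ : Set F) : Set F :=
  thSet sat (modSet sat Γ)

/-- `C_|~(Γ) = {α | Γ |~ α}`. -/
def relC {F : Type*} (rel : Set F → F → Prop) (Γ : Set F) : Set F :=
  {α | rel Γ α}

/-- `𝐂`: the sets of valuations that do not satisfy both a formula and its negation. -/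
def coFam {F V : Type*} (sat : V → F → Prop) (neg : F → F) : Set (Set V) :=
  {S | ∀ α, ¬(S ⊆ modSet sat {α} ∧ S ⊆ modSet sat {neg α})}

/-- `Γ` is consistent: for no `α` do we have both `Γ ⊢ α` and `Γ ⊢ ¬α`. -/
def isConsistent {F V : Type*} (sat : V → F → Prop) (neg : F → F) (Γ : Set F) : Prop :=
  ∀ α, ¬(modSet sat Γ ⊆ modSet sat {α} ∧ modSet sat Γ ⊆ modSet sat {neg α})

/-- One step of the inductive construction of the sets `H_i(Γ)`:
`hStep … Γ B = {¬β : β ∈ C_⊢(B) \ C_|~(Γ) and ¬β ∉ C_⊢(B)}`. -/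
def hStep {F V : Type*} (sat : V → F → Prop) (neg : F → F)
    (rel : Set F → F → Prop) (Γ B : Set F) : Set F :=
  {x | ∃ β, x = neg β ∧ β ∈ cnsq sat B ∧ β ∉ relC rel Γ ∧ neg β ∉ cnsq sat B}

/-- `hPrev … Γ n = Γ ∪ C_|~(Γ) ∪ H_1(Γ) ∪ … ∪ H_n(Γ)`. -/
def hPrev {F V : Type*} (sat : V → F → Prop) (neg : F → F)
    (rel : Set F → F → Prop) (Γ : Set F) : ℕ → Set F
  | 0 => Γ ∪ relC rel Γ
  | n + 1 => hPrev sat neg rel Γ n ∪ hStep sat neg rel Γ (hPrev sat neg rel Γ n)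

/-- `H(Γ) = ⋃_{i ≥ 1} H_i(Γ)`, where `H_{n+1}(Γ) = hStep … Γ (hPrev … Γ n)`. -/
def hSet {F V : Type*} (sat : V → F → Prop) (neg : F → F)
    (rel : Set F → F → Prop) (Γ : Set F) : Set F :=
  ⋃ n : ℕ, hStep sat neg rel Γ (hPrev sat neg rel Γ n)

/-- Assumption `(A2)`. -/
def assumpA2 {F V : Type*} (sat : V → F → Prop) (neg : F → F) : Prop :=
  ∀ (Γ : Set F) (α : F), α ∉ cnsq sat Γ → neg α ∉ cnsq sat Γ →
    ¬(modSet sat Γ ∩ modSet sat {α} ⊆ modSet sat {neg α})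

/-- Assumption `(A3)`. -/
def assumpA3 {F V : Type*} (sat : V → F → Prop) (neg : F → F)
    (disj conj : F → F → F) : Prop :=
  ∀ α β : F,
    modSet sat {disj α β} = modSet sat {α} ∪ modSet sat {β} ∧
    modSet sat {conj α β} = modSet sat {α} ∩ modSet sat {β} ∧
    modSet sat {neg (neg α)} = modSet sat {α} ∧
    modSet sat {neg (disj α β)} = modSet sat {conj (neg α) (neg β)} ∧
    modSet sat {neg (conj α β)} = modSet sat {disj (neg α) (neg β)}

/-- Condition `(|~0)`. -/
def cond0 {F V : Type*} (sat : V → F → Prop) (rel : Set F → F → Prop) : Prop :=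
  ∀ Γ Δ : Set F, cnsq sat Γ = cnsq sat Δ → relC rel Γ = relC rel Δ

/-- Condition `(|~6)`. -/
def cond6 {F V : Type*} (sat : V → F → Prop) (neg : F → F)
    (rel : Set F → F → Prop) : Prop :=
  ∀ (Γ : Set F) (α β : F),
    β ∈ cnsq sat (Γ ∪ relC rel Γ) → β ∉ relC rel Γ →
    neg α ∈ cnsq sat (Γ ∪ relC rel Γ ∪ {neg β}) → α ∉ relC rel Γ

/-- Condition `(|~7)`. -/
def cond7 {F V : Type*} (sat : V → F → Prop) (neg : F → F) (disj : F → F → F)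
    (rel : Set F → F → Prop) : Prop :=
  ∀ (Γ : Set F) (α β : F),
    α ∈ cnsq sat (Γ ∪ relC rel Γ) → α ∉ relC rel Γ →
    β ∈ cnsq sat (Γ ∪ relC rel Γ ∪ {neg α}) → β ∉ relC rel Γ →
    disj α β ∉ relC rel Γ

/-- Condition `(|~8)`. -/
def cond8 {F V : Type*} (sat : V → F → Prop) (neg : F → F)
    (rel : Set F → F → Prop) : Prop :=
  ∀ (Γ : Set F) (α : F), α ∈ relC rel Γ → neg α ∉ cnsq sat (Γ ∪ relC rel Γ)

/-- Condition `(|~9)`. -/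
def cond9 {F V : Type*} (sat : V → F → Prop) (neg : F → F)
    (rel : Set F → F → Prop) : Prop :=
  ∀ Γ Δ : Set F, relC rel Γ ∪ hSet sat neg rel Γ ⊆
    cnsq sat (Δ ∪ relC rel Δ ∪ hSet sat neg rel Δ ∪ Γ)

/-- Condition `(|~10)`. -/
def cond10 {F V : Type*} (sat : V → F → Prop) (neg : F → F)
    (rel : Set F → F → Prop) : Prop :=
  ∀ Γ : Set F, isConsistent sat neg Γ →
    isConsistent sat neg (relC rel Γ) ∧ Γ ⊆ relC rel Γ ∧
      cnsq sat (relC rel Γ) = relC rel Γ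

/-- Condition `(|~11)`. -/
def cond11 {F V : Type*} (sat : V → F → Prop) (neg : F → F)
    (rel : Set F → F → Prop) : Prop :=
  ∀ Γ : Set F, cnsq sat (Γ ∪ relC rel Γ ∪ hSet sat neg rel Γ) =
    thSet sat {v ∈ modSet sat Γ | ∀ Δ : Set F, v ∈ modSet sat Δ →
      v ∈ modSet sat (relC rel Δ ∪ hSet sat neg rel Δ)}

/-- Condition `(|~12)`. -/
def cond12 {F V : Type*} (sat : V → F → Prop) (neg : F → F)
    (rel : Set F → F → Prop) : Prop :=
  Set.univ \ {v : V | ∀ Δ : Set F, v ∈ modSet sat Δ →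
    v ∈ modSet sat (relC rel Δ ∪ hSet sat neg rel Δ)} ∈ defFam sat

/-!
Write `Y = Mod(Γ ∪ C_|~(Γ))`, and call `Z ⊆ Y` negation-closed for `Γ` when every formula
`β ∉ C_|~(Γ)` true throughout `Z` has `¬β` true throughout `Z`. Since `𝒱` is finite, the
construction of `H(Γ)` stabilises, and `X(Γ) = Mod(Γ ∪ C_|~(Γ) ∪ H(Γ))` is the largest
negation-closed set for `Γ`.

If `|~` is represented by `μ`, then `μ(Mod Γ)` is negation-closed, so `μ(Mod Γ) ⊆ X(Γ)`;
definability of `μ(Mod Γ)` together with (A2) forces equality, and (|~9) becomes strong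
coherence. Conversely, `μ(Mod Γ) := X(Γ)` is well defined by (|~0), strongly coherent by (|~9),
and represents `|~`: for `α ∈ C_|~(Γ)` one needs a negation-closed `Z` with `Z ⊄ Mod(¬α)`. If
`Y` proves no `δ ∉ C_|~(Γ)`, then `Z = Y` works by (|~8); otherwise `Z = Y ∩ Mod(¬δ)` for such a
`δ` with `Z` minimal works by (|~6), its negation-closedness coming from (|~7), which makes
`δ ∨ β` another such formula with `Y ∩ Mod(¬(δ ∨ β)) = Z ∩ Mod(¬β)`.
-/

open Set

section Semantics

variable {F V : Type*} (sat : V → F → Prop)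

lemma subset_modSet_iff {Z : Set V} {Γ : Set F} :
    Z ⊆ modSet sat Γ ↔ ∀ α ∈ Γ, Z ⊆ modSet sat {α} := by
  simp only [subset_def, modSet, mem_ofPred_eq, mem_singleton_iff, forall_eq]
  exact ⟨fun h α hα v hv => h v hv α hα, fun h v hv α hα => h α hα v hv⟩

lemma modSet_subset_of_mem {Γ : Set F} {α : F} (h : α ∈ Γ) :
    modSet sat Γ ⊆ modSet sat {α} :=
  (subset_modSet_iff sat).1 subset_rfl α h

lemma modSet_anti {A B : Set F} (h : A ⊆ B) : modSet sat B ⊆ modSet sat A :=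
  (subset_modSet_iff sat).2 fun _ hα => modSet_subset_of_mem sat (h hα)

lemma modSet_union (A B : Set F) :
    modSet sat (A ∪ B) = modSet sat A ∩ modSet sat B := by
  ext v; simp [modSet, or_imp, forall_and]

lemma subset_cnsq_iff {A B : Set F} : A ⊆ cnsq sat B ↔ modSet sat B ⊆ modSet sat A :=
  (subset_modSet_iff sat).symm

lemma modSet_cnsq (Γ : Set F) : modSet sat (cnsq sat Γ) = modSet sat Γ :=
  (modSet_anti sat ((subset_cnsq_iff sat).2 subset_rfl)).antisymm
    ((subset_cnsq_iff sat).1 subset_rfl)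

lemma modSet_eq_of_cnsq_eq {Γ Δ : Set F} (h : cnsq sat Γ = cnsq sat Δ) :
    modSet sat Γ = modSet sat Δ := by
  rw [← modSet_cnsq sat Γ, h, modSet_cnsq]

end Semantics

namespace assumpA3

variable {F V : Type*} {sat : V → F → Prop} {neg : F → F} {disj conj : F → F → F}

lemma modSet_disj (hA3 : assumpA3 sat neg disj conj) (α β : F) :
    modSet sat {disj α β} = modSet sat {α} ∪ modSet sat {β} :=
  (hA3 α β).1

lemma modSet_conj (hA3 : assumpA3 sat neg disj conj) (α β : F) :
    modSet sat {conj α β} = modSet sat {α} ∩ modSet sat {β} :=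
  (hA3 α β).2.1

lemma modSet_neg_neg (hA3 : assumpA3 sat neg disj conj) (α : F) :
    modSet sat {neg (neg α)} = modSet sat {α} :=
  (hA3 α α).2.2.1

lemma modSet_neg_disj (hA3 : assumpA3 sat neg disj conj) (α β : F) :
    modSet sat {neg (disj α β)} = modSet sat {neg α} ∩ modSet sat {neg β} := by
  rw [(hA3 α β).2.2.2.1, hA3.modSet_conj]

lemma exists_modSet_singleton_eq [Finite V] (hA3 : assumpA3 sat neg disj conj)
    {S : Set F} (hS : S.Nonempty) : ∃ τ, modSet sat {τ} = modSet sat S := by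
  obtain ⟨σ, hσ⟩ := hS
  obtain ⟨τ, hSτ, hmin⟩ := exists_minimalFor_of_wellFoundedLT
    (fun τ => modSet sat S ⊆ modSet sat {τ}) (fun τ => modSet sat {τ})
    ⟨σ, modSet_subset_of_mem sat hσ⟩
  refine ⟨τ, hSτ.antisymm' ((subset_modSet_iff sat).2 fun σ' hσ' => ?_)⟩
  have hτσ' : modSet sat {conj τ σ'} = modSet sat {τ} ∩ modSet sat {σ'} := hA3.modSet_conj τ σ'
  have hτ : modSet sat {τ} ⊆ modSet sat {conj τ σ'} :=
    hmin ((subset_inter hSτ (modSet_subset_of_mem sat hσ')).trans_eq hτσ'.symm)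
      (hτσ'.trans_subset inter_subset_left)
  exact hτ.trans (hτσ'.trans_subset inter_subset_right)

end assumpA3

section Closure

variable {F V : Type*} (sat : V → F → Prop) (neg : F → F) (rel : Set F → F → Prop)

def hModels (Γ : Set F) : Set V :=
  modSet sat (Γ ∪ relC rel Γ ∪ hSet sat neg rel Γ)

def IsNegClosed (Γ : Set F) (Z : Set V) : Prop :=
  Z ⊆ modSet sat (Γ ∪ relC rel Γ) ∧
    ∀ β ∉ relC rel Γ, Z ⊆ modSet sat {β} → Z ⊆ modSet sat {neg β}

def Represents (Γ : Set F) (W : Set V) : Prop :=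
  ∀ α, rel Γ α ↔ W ⊆ modSet sat {α} ∧ ¬ W ⊆ modSet sat {neg α}

variable {sat neg rel}

lemma monotone_hPrev (Γ : Set F) : Monotone (hPrev sat neg rel Γ) :=
  monotone_nat_of_le_succ fun _ => subset_union_left

lemma hPrev_subset (Γ : Set F) (n : ℕ) :
    hPrev sat neg rel Γ n ⊆ Γ ∪ relC rel Γ ∪ hSet sat neg rel Γ := by
  induction n with
  | zero => exact subset_union_left
  | succ n ih =>
    exact union_subset ih ((subset_iUnion (fun k => hStep sat neg rel Γ (hPrev sat neg rel Γ k))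
      n).trans subset_union_right)

lemma exists_mem_hPrev {Γ : Set F} {φ : F} (h : φ ∈ Γ ∪ relC rel Γ ∪ hSet sat neg rel Γ) :
    ∃ n, φ ∈ hPrev sat neg rel Γ n := by
  rcases h with h | h
  · exact ⟨0, h⟩
  · obtain ⟨n, hn⟩ := mem_iUnion.1 h
    exact ⟨n + 1, Or.inr hn⟩

lemma exists_hModels_eq [Finite V] (Γ : Set F) :
    ∃ n, hModels sat neg rel Γ = modSet sat (hPrev sat neg rel Γ n) := by
  have hanti : Antitone fun n => modSet sat (hPrev sat neg rel Γ n) :=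
    fun _ _ h => modSet_anti sat (monotone_hPrev Γ h)
  obtain ⟨n, hn⟩ := WellFoundedLT.antitone_chain_condition hanti
  refine ⟨n, (modSet_anti sat (hPrev_subset Γ n)).antisymm
    ((subset_modSet_iff sat).2 fun φ hφ => ?_)⟩
  obtain ⟨m, hm⟩ := exists_mem_hPrev hφ
  have hnm : modSet sat (hPrev sat neg rel Γ n) ⊆ modSet sat (hPrev sat neg rel Γ m) :=
    (le_total n m).elim (fun h => (hn m h).le) (fun h => hanti h)
  exact hnm.trans (modSet_subset_of_mem sat hm)

lemma isNegClosed_hModels [Finite V] (Γ : Set F) :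
    IsNegClosed sat neg rel Γ (hModels sat neg rel Γ) := by
  refine ⟨modSet_anti sat subset_union_left, fun β hβ hXβ => ?_⟩
  obtain ⟨n, hn⟩ := exists_hModels_eq (sat := sat) (neg := neg) (rel := rel) Γ
  rw [hn] at hXβ
  by_cases hnβ : neg β ∈ cnsq sat (hPrev sat neg rel Γ n)
  · rw [hn]; exact hnβ
  · exact modSet_subset_of_mem sat (Or.inr (mem_iUnion.2 ⟨n, β, rfl, hXβ, hβ, hnβ⟩))

lemma IsNegClosed.subset_modSet_hPrev {Γ : Set F} {Z : Set V}
    (hZ : IsNegClosed sat neg rel Γ Z) (n : ℕ) : Z ⊆ modSet sat (hPrev sat neg rel Γ n) := by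
  induction n with
  | zero => exact hZ.1
  | succ n ih =>
    rw [hPrev, modSet_union]
    refine subset_inter ih ((subset_modSet_iff sat).2 ?_)
    rintro _ ⟨β, rfl, hβ, hβC, -⟩
    exact hZ.2 β hβC (ih.trans hβ)

lemma IsNegClosed.subset_hModels {Γ : Set F} {Z : Set V} (hZ : IsNegClosed sat neg rel Γ Z) :
    Z ⊆ hModels sat neg rel Γ := by
  refine (subset_modSet_iff sat).2 fun φ hφ => ?_
  obtain ⟨n, hn⟩ := exists_mem_hPrev hφ
  exact (hZ.subset_modSet_hPrev n).trans (modSet_subset_of_mem sat hn)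

lemma hModels_congr [Finite V] (h0 : cond0 sat rel) {Γ Δ : Set F}
    (h : modSet sat Γ = modSet sat Δ) : hModels sat neg rel Γ = hModels sat neg rel Δ := by
  have hC : relC rel Γ = relC rel Δ := h0 Γ Δ (congrArg (thSet sat) h)
  have hZ : IsNegClosed sat neg rel Γ = IsNegClosed sat neg rel Δ := by
    unfold IsNegClosed; rw [modSet_union, modSet_union, h, hC]
  have hΓ := isNegClosed_hModels (sat := sat) (neg := neg) (rel := rel) Γ
  have hΔ := isNegClosed_hModels (sat := sat) (neg := neg) (rel := rel) Δ
  rw [hZ] at hΓ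
  rw [← hZ] at hΔ
  exact hΓ.subset_hModels.antisymm hΔ.subset_hModels

lemma cond9_iff : cond9 sat neg rel ↔
    ∀ Γ Δ : Set F, hModels sat neg rel Δ ∩ modSet sat Γ ⊆ hModels sat neg rel Γ := by
  refine forall_congr' fun Γ => forall_congr' fun Δ => ?_
  rw [subset_cnsq_iff, hModels, hModels, union_assoc Γ, modSet_union sat Γ, modSet_union,
    subset_inter_iff, and_iff_right inter_subset_right]

end Closure

section Necessity

variable {F V : Type*} {sat : V → F → Prop} {neg : F → F} {disj conj : F → F → F}
  {rel : Set F → F → Prop}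

lemma Represents.isNegClosed {Γ : Set F} {W : Set V} (hW : Represents sat neg rel Γ W)
    (hWΓ : W ⊆ modSet sat Γ) : IsNegClosed sat neg rel Γ W := by
  refine ⟨?_, fun β hβ hWβ => by_contra fun h => hβ ((hW β).2 ⟨hWβ, h⟩)⟩
  rw [modSet_union]
  exact subset_inter hWΓ ((subset_modSet_iff sat).2 fun α hα => ((hW α).1 hα).1)

lemma cond0_of_represents {μ : Set V → Set V}
    (hμ : ∀ Γ, Represents sat neg rel Γ (μ (modSet sat Γ))) : cond0 sat rel := by
  intro Γ Δ h
  ext α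
  exact (hμ Γ α).trans (by rw [modSet_eq_of_cnsq_eq sat h]; exact (hμ Δ α).symm)

lemma cond6_of_represents {W : Set F → Set V} (hW : ∀ Γ, Represents sat neg rel Γ (W Γ))
    (hWΓ : ∀ Γ, W Γ ⊆ modSet sat Γ) : cond6 sat neg rel := by
  intro Γ α β hβ hβC hnα hα
  have hc := (hW Γ).isNegClosed (hWΓ Γ)
  have hWβ : W Γ ⊆ modSet sat (Γ ∪ relC rel Γ ∪ {neg β}) := by
    rw [modSet_union]
    exact subset_inter hc.1 (hc.2 β hβC (hc.1.trans hβ))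
  exact ((hW Γ α).1 hα).2 (hWβ.trans hnα)

lemma cond7_of_represents (hA3 : assumpA3 sat neg disj conj) {W : Set F → Set V}
    (hW : ∀ Γ, Represents sat neg rel Γ (W Γ)) (hWΓ : ∀ Γ, W Γ ⊆ modSet sat Γ) :
    cond7 sat neg disj rel := by
  intro Γ α β hα hαC hβ hβC hαβ
  have hc := (hW Γ).isNegClosed (hWΓ Γ)
  have hWnα : W Γ ⊆ modSet sat {neg α} := hc.2 α hαC (hc.1.trans hα)
  have hWβ : W Γ ⊆ modSet sat {β} := by
    refine subset_trans ?_ hβ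
    rw [modSet_union]
    exact subset_inter hc.1 hWnα
  refine ((hW Γ _).1 hαβ).2 ?_
  rw [hA3.modSet_neg_disj]
  exact subset_inter hWnα (hc.2 β hβC hWβ)

lemma cond8_of_represents {W : Set F → Set V} (hW : ∀ Γ, Represents sat neg rel Γ (W Γ))
    (hWΓ : ∀ Γ, W Γ ⊆ modSet sat Γ) : cond8 sat neg rel :=
  fun Γ α hα hnα => ((hW Γ α).1 hα).2 (((hW Γ).isNegClosed (hWΓ Γ)).1.trans hnα)

/-- A valuation of `X(Γ) \ W` would make a formula defining `W` violate (A2) over `X(Γ)`. -/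
lemma hModels_eq_of_represents [Finite V] (hA3 : assumpA3 sat neg disj conj)
    (hA2 : assumpA2 sat neg) {Γ : Set F} {W : Set V} (hW : Represents sat neg rel Γ W)
    (hWΓ : W ⊆ modSet sat Γ) (hWdef : W ∈ defFam sat) : hModels sat neg rel Γ = W := by
  have hWc := hW.isNegClosed hWΓ
  have hXc := isNegClosed_hModels (sat := sat) (neg := neg) (rel := rel) Γ
  refine subset_antisymm ?_ hWc.subset_hModels
  by_contra hXW
  obtain ⟨v, hvX, hvW⟩ := not_subset.1 hXW
  obtain ⟨S, rfl⟩ := hWdef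
  have hS : S.Nonempty := nonempty_iff_ne_empty.2 fun h => hvW (by simp [h, modSet])
  obtain ⟨τ, hτ⟩ := hA3.exists_modSet_singleton_eq hS
  have hvτ : v ∉ modSet sat {τ} := hτ ▸ hvW
  have hτC : τ ∉ relC rel Γ := fun h =>
    hvτ (hXc.1.trans (modSet_subset_of_mem sat (Or.inr h)) hvX)
  have hnτC : neg τ ∉ relC rel Γ := fun h =>
    ((hW _).1 h).2 (by rw [hA3.modSet_neg_neg, hτ])
  have hWnτ : modSet sat S ⊆ modSet sat {neg τ} := hWc.2 τ hτC hτ.ge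
  refine hA2 _ τ (fun h => hvτ (h hvX)) (fun h => hvτ ?_) ?_
  · exact (hA3.modSet_neg_neg τ ▸ hXc.2 _ hnτC h) hvX
  · exact (inter_subset_right.trans hτ.le).trans hWnτ

end Necessity

section Sufficiency

variable {F V : Type*} {sat : V → F → Prop} {neg : F → F} {disj conj : F → F → F}
  {rel : Set F → F → Prop}

lemma exists_isNegClosed_inter_neg [Finite V] (hA3 : assumpA3 sat neg disj conj)
    (h7 : cond7 sat neg disj rel) {Γ : Set F} {δ : F} (hδ : δ ∈ cnsq sat (Γ ∪ relC rel Γ))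
    (hδC : δ ∉ relC rel Γ) :
    ∃ δ', δ' ∈ cnsq sat (Γ ∪ relC rel Γ) ∧ δ' ∉ relC rel Γ ∧
      IsNegClosed sat neg rel Γ (modSet sat (Γ ∪ relC rel Γ ∪ {neg δ'})) := by
  obtain ⟨δ', ⟨hδ', hδ'C⟩, hmin⟩ := exists_minimalFor_of_wellFoundedLT
    (fun δ => δ ∈ cnsq sat (Γ ∪ relC rel Γ) ∧ δ ∉ relC rel Γ)
    (fun δ => modSet sat (Γ ∪ relC rel Γ ∪ {neg δ})) ⟨δ, hδ, hδC⟩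
  refine ⟨δ', hδ', hδ'C, modSet_anti sat subset_union_left, fun β hβC hβ => ?_⟩
  have hδ'β : disj δ' β ∈ cnsq sat (Γ ∪ relC rel Γ) := by
    change modSet sat (Γ ∪ relC rel Γ) ⊆ modSet sat {disj δ' β}
    rw [hA3.modSet_disj]
    exact hδ'.trans subset_union_left
  have hsplit : modSet sat (Γ ∪ relC rel Γ ∪ {neg (disj δ' β)}) =
      modSet sat (Γ ∪ relC rel Γ ∪ {neg δ'}) ∩ modSet sat {neg β} := by
    rw [modSet_union, modSet_union sat _ {neg δ'}, hA3.modSet_neg_disj, inter_assoc]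
  have hmin' : modSet sat (Γ ∪ relC rel Γ ∪ {neg δ'}) ⊆
      modSet sat (Γ ∪ relC rel Γ ∪ {neg (disj δ' β)}) :=
    hmin ⟨hδ'β, h7 Γ δ' β hδ' hδ'C hβ hβC⟩ (hsplit.trans_subset inter_subset_left)
  rw [hsplit] at hmin'
  exact hmin'.trans inter_subset_right

lemma exists_isNegClosed_not_subset [Finite V] (hA3 : assumpA3 sat neg disj conj)
    (h6 : cond6 sat neg rel) (h7 : cond7 sat neg disj rel) (h8 : cond8 sat neg rel)
    {Γ : Set F} {α : F} (hα : α ∈ relC rel Γ) :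
    ∃ Z, IsNegClosed sat neg rel Γ Z ∧ ¬ Z ⊆ modSet sat {neg α} := by
  by_cases hδ : ∃ δ, δ ∈ cnsq sat (Γ ∪ relC rel Γ) ∧ δ ∉ relC rel Γ
  · obtain ⟨δ, hδ, hδC⟩ := hδ
    obtain ⟨δ', hδ', hδ'C, hZ⟩ := exists_isNegClosed_inter_neg hA3 h7 hδ hδC
    exact ⟨_, hZ, fun h => h6 Γ α δ' hδ' hδ'C h hα⟩
  · push Not at hδ
    exact ⟨_, ⟨subset_rfl, fun β hβC hβ => (hβC (hδ β hβ)).elim⟩, h8 Γ α hα⟩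

lemma represents_hModels [Finite V] (hA3 : assumpA3 sat neg disj conj)
    (h6 : cond6 sat neg rel) (h7 : cond7 sat neg disj rel) (h8 : cond8 sat neg rel)
    (Γ : Set F) : Represents sat neg rel Γ (hModels sat neg rel Γ) := by
  have hX := isNegClosed_hModels (sat := sat) (neg := neg) (rel := rel) Γ
  refine fun α => ⟨fun hα => ⟨hX.1.trans (modSet_subset_of_mem sat (Or.inr hα)), fun h => ?_⟩,
    fun ⟨hXα, hXnα⟩ => by_contra fun hα => hXnα (hX.2 α hα hXα)⟩
  obtain ⟨Z, hZ, hZα⟩ := exists_isNegClosed_not_subset hA3 h6 h7 h8 hα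
  exact hZα (hZ.subset_hModels.trans h)

end Sufficiency

/-- Under `(A3)`, `(A1)`, and `(A2)`, `|~` is a definability preserving
pivotal-discriminative consequence relation iff it satisfies `(|~0)`, `(|~6)`, `(|~7)`,
`(|~8)`, and `(|~9)`. -/
theorem stmt11 {F V : Type*} (neg : F → F) (disj conj : F → F → F)
    (sat : V → F → Prop)
    (hA3 : assumpA3 sat neg disj conj) (hA1 : Finite V)
    (hA2 : assumpA2 sat neg)
    (rel : Set F → F → Prop) :
    (∃ μ : Set V → Set V,
        (∀ A ∈ defFam sat, μ A ⊆ A) ∧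
        (∀ A ∈ defFam sat, ∀ B ∈ defFam sat, μ B ∩ A ⊆ μ A) ∧
        (∀ A ∈ defFam sat, μ A ∈ defFam sat) ∧
        (∀ (Γ : Set F) (α : F), rel Γ α ↔
          (μ (modSet sat Γ) ⊆ modSet sat {α} ∧
            ¬ μ (modSet sat Γ) ⊆ modSet sat {neg α}))) ↔
      (cond0 sat rel ∧ cond6 sat neg rel ∧ cond7 sat neg disj rel ∧
        cond8 sat neg rel ∧ cond9 sat neg rel) := by
  have := hA1
  constructor
  · rintro ⟨μ, hch, hsc, hdp, hrepr⟩
    have hch' : ∀ Γ, μ (modSet sat Γ) ⊆ modSet sat Γ := fun Γ => hch _ ⟨Γ, rfl⟩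
    have hX : ∀ Γ, hModels sat neg rel Γ = μ (modSet sat Γ) := fun Γ =>
      hModels_eq_of_represents hA3 hA2 (hrepr Γ) (hch' Γ) (hdp _ ⟨Γ, rfl⟩)
    refine ⟨cond0_of_represents hrepr, cond6_of_represents hrepr hch',
      cond7_of_represents hA3 hrepr hch', cond8_of_represents hrepr hch',
      cond9_iff.2 fun Γ Δ => ?_⟩
    rw [hX, hX]
    exact hsc _ ⟨Γ, rfl⟩ _ ⟨Δ, rfl⟩
  · rintro ⟨h0, h6, h7, h8, h9⟩
    have hμ : ∀ Γ, hModels sat neg rel (thSet sat (modSet sat Γ)) = hModels sat neg rel Γ :=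
      fun Γ => hModels_congr h0 (modSet_cnsq sat Γ)
    -- for definable `A`, `Th A` is a canonical `Γ` with `Mod Γ = A`
    refine ⟨fun A => hModels sat neg rel (thSet sat A), ?_, ?_, fun A _ => ⟨_, rfl⟩, ?_⟩
    · rintro _ ⟨Γ, rfl⟩
      simp only [hμ]
      exact modSet_anti sat (subset_union_left.trans subset_union_left)
    · rintro _ ⟨Γ, rfl⟩ _ ⟨Δ, rfl⟩
      simp only [hμ]
      exact cond9_iff.1 h9 Γ Δ
    · intro Γ α
      simp only [hμ]
      exact represents_hModels hA3 h6 h7 h8 Γ α
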